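/- arXiv:1602.02987 — 4 statements merged into one kernel-verified Lean document; each statement's English description precedes it below -/
import Mathlib

section
/- For distinct nodes u, v of Γ with u not linked to v, the linear inequality x_u + x_v − 2·Σ_{i ∈ V∖{u,v}} x_i ≤ 1 is valid on P(Γ), and the set of points of P(Γ) satisfying it with equality is exactly the segment [χ({u}), χ({v})]; hence χ({u}) and χ({v}) are adjacent vertices of P(Γ). -/
open Set

noncomputable section

variable {V : Type*}

/-- Characteristic vector of a set of nodes. -/
def chi (S : Set V) : V → ℝ := S.indicator (fun _ => (1 : ℝ))

/-- The candidate vertex set of the polytope `P(Γ)`. -/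
def polyVerts (G : SimpleGraph V) : Set (V → ℝ) :=
  {x | x = chi (∅ : Set V) ∨ (∃ v : V, x = chi {v}) ∨
        (∃ u w : V, G.Adj u w ∧ x = chi {u, w})}

/-- The polytope `P(Γ)`. -/
def poly (G : SimpleGraph V) : Set (V → ℝ) := convexHull ℝ (polyVerts G)

/-- Two points are adjacent vertices of a convex set `P` when the segment
joining them is a (1-dimensional) face, i.e. an extreme subset of `P`. -/
def AdjVert (P : Set (V → ℝ)) (p q : V → ℝ) : Prop :=
  p ≠ q ∧ IsExtreme ℝ P (segment ℝ p q)

/-- A combinatorial automorphism of `P`: a bijection of the vertex (extreme point)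
set of `P` mapping the vertex set of each face onto the vertex set of some face. -/
def IsCombAut (P : Set (V → ℝ)) (σ : (V → ℝ) → (V → ℝ)) : Prop :=
  Set.BijOn σ (P.extremePoints ℝ) (P.extremePoints ℝ) ∧
  ∀ F : Set (V → ℝ), IsExtreme ℝ P F →
    ∃ F' : Set (V → ℝ), IsExtreme ℝ P F' ∧
      σ '' (F ∩ P.extremePoints ℝ) = F' ∩ P.extremePoints ℝ

/-- An automorphism of the skeleton of `P`: a bijection of the vertex set of `P`
preserving adjacency (in both directions). -/
def IsSkelAut (P : Set (V → ℝ)) (σ : (V → ℝ) → (V → ℝ)) : Prop :=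
  Set.BijOn σ (P.extremePoints ℝ) (P.extremePoints ℝ) ∧
  ∀ p ∈ P.extremePoints ℝ, ∀ q ∈ P.extremePoints ℝ,
    (AdjVert P p q ↔ AdjVert P (σ p) (σ q))

/-
The functional `f x = x u + x v - 2 ∑_{i ≠ u, v} x i` takes the value `1` at `χ{u}` and `χ{v}`,
`0` at `χ∅`, `-2` at every other singleton, and at most `1 - 2` at an edge, because an edge meets
`{u, v}` in at most one node when `u` and `v` are not linked. So `f ≤ 1` on the vertices of `P(Γ)`
with equality exactly at `χ{u}` and `χ{v}`. For a linear functional bounded by `c` on a set `s`,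
the points of `convexHull s` where it equals `c` form an extreme subset, namely the convex hull of
the points of `s` where it equals `c`; here that hull is the segment `[χ{u}, χ{v}]`.
-/

section LinearFunctional

variable {𝕜 E : Type*} [Field 𝕜] [LinearOrder 𝕜] [IsStrictOrderedRing 𝕜]
  [AddCommGroup E] [Module 𝕜 E] {f : E →ₗ[𝕜] 𝕜} {c : 𝕜} {s : Set E}

lemma LinearMap.lt_of_mem_openSegment {x y z : E} (hx : f x < c) (hy : f y ≤ c)
    (hz : z ∈ openSegment 𝕜 x y) : f z < c := by
  obtain ⟨a, b, ha, hb, hab, rfl⟩ := hz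
  rw [map_add, map_smul, map_smul, smul_eq_mul, smul_eq_mul]
  have hc : c = a * c + b * c := by rw [← add_mul, hab, one_mul]
  linarith [mul_lt_mul_of_pos_left hx ha, mul_le_mul_of_nonneg_left hy hb.le]

lemma LinearMap.isExtreme_sep_eq_of_le (hf : ∀ x ∈ s, f x ≤ c) :
    IsExtreme 𝕜 s {x ∈ s | f x = c} := by
  refine ⟨sep_subset _ _, fun x hx y hy z ⟨_, hfz⟩ hz => ⟨hx, ?_⟩⟩
  exact (hf x hx).eq_of_not_lt fun hlt => (lt_of_mem_openSegment hlt (hf y hy) hz).ne hfz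

lemma LinearMap.convexHull_subset_setOf_le (hf : ∀ x ∈ s, f x ≤ c) :
    convexHull 𝕜 s ⊆ {x | f x ≤ c} :=
  convexHull_min hf (convex_halfSpace_le f.isLinear c)

lemma LinearMap.convexHull_sep_subset_setOf_eq :
    convexHull 𝕜 {x ∈ s | f x = c} ⊆ {x | f x = c} :=
  convexHull_min (fun _ hx => hx.2) (convex_hyperplane f.isLinear c)

/- Every point of `convexHull s` lies in the convex set `{f < c} ∪ convexHull {x ∈ s | f x = c}`:
an open segment leaving the second part has one end in `{f < c}`, hence lies there entirely. -/
lemma LinearMap.sep_convexHull_eq_convexHull_sep (hf : ∀ x ∈ s, f x ≤ c) :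
    {x ∈ convexHull 𝕜 s | f x = c} = convexHull 𝕜 {x ∈ s | f x = c} := by
  set t := convexHull 𝕜 {x ∈ s | f x = c}
  have ht : t ⊆ {x | f x = c} := convexHull_sep_subset_setOf_eq
  have hle : ∀ x ∈ {x | f x < c} ∪ t, f x ≤ c := by
    rintro x (hx | hx)
    exacts [le_of_lt hx, (ht hx).le]
  have hconvex : Convex 𝕜 ({x | f x < c} ∪ t) := by
    refine convex_iff_openSegment_subset.mpr fun x hx y hy => ?_
    rcases hx with hx | hx
    · exact fun z hz => Or.inl (lt_of_mem_openSegment hx (hle y hy) hz)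
    rcases hy with hy | hy
    · rw [openSegment_symm]
      exact fun z hz => Or.inl (lt_of_mem_openSegment hy (ht hx).le hz)
    · exact (openSegment_subset_segment 𝕜 x y).trans
        ((convex_convexHull 𝕜 _).segment_subset hx hy) |>.trans subset_union_right
  have hsub : convexHull 𝕜 s ⊆ {x | f x < c} ∪ t := by
    refine convexHull_min (fun x hx => ?_) hconvex
    rcases (hf x hx).lt_or_eq with hlt | heq
    exacts [Or.inl hlt, Or.inr (subset_convexHull 𝕜 _ ⟨hx, heq⟩)]
  refine subset_antisymm ?_ fun x hx => ⟨convexHull_mono (sep_subset s _) hx, ht hx⟩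
  rintro x ⟨hx, hfx⟩
  exact (hsub hx).resolve_left fun hlt => hlt.ne hfx

end LinearFunctional

section Graph

lemma chi_pair (a b : V) (hab : a ≠ b) :
    chi ({a, b} : Set V) = chi ({a} : Set V) + chi ({b} : Set V) := by
  funext i
  rw [chi, chi, chi, ← Set.singleton_union, Set.indicator_union_of_disjoint (by simpa using hab)]
  rfl

variable [DecidableEq V]

lemma chi_singleton_apply (w i : V) : chi ({w} : Set V) i = if i = w then 1 else 0 := by
  simp [chi, Set.indicator_apply]

lemma chi_singleton_injective : Function.Injective (fun w : V => chi ({w} : Set V)) := by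
  intro a b hab
  simpa [chi_singleton_apply] using congrFun hab a

variable [Fintype V]

def pairFunctional (u v : V) : (V → ℝ) →ₗ[ℝ] ℝ where
  toFun x := x u + x v - 2 * ∑ i ∈ Finset.univ \ {u, v}, x i
  map_add' x y := by
    simp only [Pi.add_apply, Finset.sum_add_distrib]
    ring
  map_smul' a x := by
    simp only [Pi.smul_apply, smul_eq_mul, RingHom.id_apply, ← Finset.mul_sum]
    ring

lemma pairFunctional_chi_singleton {u v : V} (huv : u ≠ v) (w : V) :
    pairFunctional u v (chi ({w} : Set V)) = if w = u ∨ w = v then 1 else -2 := by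
  simp only [pairFunctional, LinearMap.coe_mk, AddHom.coe_mk, chi_singleton_apply,
    Finset.sum_ite_eq', Finset.mem_sdiff, Finset.mem_univ, Finset.mem_insert,
    Finset.mem_singleton, true_and]
  by_cases hu : w = u <;> by_cases hv : w = v <;> simp_all [eq_comm]

lemma polyVerts_eq_chi_or_pairFunctional_nonpos {G : SimpleGraph V} {u v : V} (huv : u ≠ v)
    (h : ¬ G.Adj u v) {p : V → ℝ} (hp : p ∈ polyVerts G) :
    p = chi {u} ∨ p = chi {v} ∨ pairFunctional u v p ≤ 0 := by
  rcases hp with rfl | ⟨w, rfl⟩ | ⟨a, b, hab, rfl⟩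
  · simp [pairFunctional, chi]
  · by_cases hw : w = u ∨ w = v
    · rcases hw with rfl | rfl <;> simp
    · simp [pairFunctional_chi_singleton huv, hw]
  · right; right
    have hnot : ¬ ((a = u ∨ a = v) ∧ (b = u ∨ b = v)) := by
      rintro ⟨rfl | rfl, rfl | rfl⟩
      exacts [hab.ne rfl, h hab, h hab.symm, hab.ne rfl]
    rw [chi_pair a b hab.ne, map_add, pairFunctional_chi_singleton huv,
      pairFunctional_chi_singleton huv]
    split_ifs <;> first | tauto | norm_num

end Graph

theorem stmt2 [Fintype V] [DecidableEq V] (G : SimpleGraph V) {u v : V}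
    (huv : u ≠ v) (h : ¬ G.Adj u v) :
    (∀ x ∈ poly G, x u + x v - 2 * ∑ i ∈ Finset.univ \ {u, v}, x i ≤ 1) ∧
    {x ∈ poly G | x u + x v - 2 * ∑ i ∈ Finset.univ \ {u, v}, x i = 1} =
      segment ℝ (chi ({u} : Set V)) (chi ({v} : Set V)) ∧
    AdjVert (poly G) (chi ({u} : Set V)) (chi ({v} : Set V)) := by
  set f := pairFunctional u v
  have hfu : f (chi {u}) = 1 := by simp [f, pairFunctional_chi_singleton huv]
  have hfv : f (chi {v}) = 1 := by simp [f, pairFunctional_chi_singleton huv]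
  have hverts : {p ∈ polyVerts G | f p = 1} = {chi {u}, chi {v}} := by
    ext p
    refine ⟨fun ⟨hp, hfp⟩ => ?_, ?_⟩
    · rcases polyVerts_eq_chi_or_pairFunctional_nonpos huv h hp with rfl | rfl | hnonpos
      exacts [Or.inl rfl, Or.inr rfl, absurd hfp (by linarith)]
    · rintro (rfl | rfl)
      exacts [⟨Or.inr (Or.inl ⟨u, rfl⟩), hfu⟩, ⟨Or.inr (Or.inl ⟨v, rfl⟩), hfv⟩]
  have hle : ∀ p ∈ polyVerts G, f p ≤ 1 := fun p hp => by
    rcases polyVerts_eq_chi_or_pairFunctional_nonpos huv h hp with rfl | rfl | hnonpos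
    exacts [hfu.le, hfv.le, hnonpos.trans zero_le_one]
  have hface : {x ∈ poly G | f x = 1} = segment ℝ (chi {u}) (chi {v}) := by
    rw [poly, f.sep_convexHull_eq_convexHull_sep hle, hverts, convexHull_pair]
  refine ⟨f.convexHull_subset_setOf_le hle, hface, ?_, ?_⟩
  · exact chi_singleton_injective.ne huv
  · rw [← hface]
    exact f.isExtreme_sep_eq_of_le (f.convexHull_subset_setOf_le hle)
end
end

section
/- If e and f are disjoint links of Γ which are contained in a common four-cycle (i.e. there exist links e', f' such that e, e', f, f' form a 4-cycle), then the midpoint of χ(e) and χ(f) equals the midpoint of χ(e') and χ(f'), hence χ(e) and χ(f) are not adjacent vertices of P(Γ). -/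
open Set

noncomputable section

variable {V : Type*}

/-
The characteristic vectors of the two perfect matchings {ab, cd} and {bc, da} of the
four-cycle both sum to χ({a, b, c, d}), so the two segments [χ(ab), χ(cd)] and
[χ(bc), χ(da)] cross at their common midpoint. If [χ(ab), χ(cd)] were a face of P(Γ),
it would therefore contain χ(bc); but every point of that segment takes equal values at
a and b, while χ(bc) does not.
-/

theorem chi_union_of_disjoint {S T : Set V} (h : Disjoint S T) :
    chi (S ∪ T) = chi S + chi T := by
  rw [chi, chi, chi, indicator_union_of_disjoint h]
  rfl

theorem disjoint_pair_pair {a b c d : V} (hac : a ≠ c) (had : a ≠ d) (hbc : b ≠ c)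
    (hbd : b ≠ d) : Disjoint ({a, b} : Set V) {c, d} := by
  simp only [disjoint_insert_right, disjoint_singleton_right, mem_insert_iff, mem_singleton_iff]
  tauto

theorem midpoint_chi_eq_of_union_eq {S T S' T' : Set V} (h : Disjoint S T)
    (h' : Disjoint S' T') (hunion : S ∪ T = S' ∪ T') :
    midpoint ℝ (chi S) (chi T) = midpoint ℝ (chi S') (chi T') := by
  rw [midpoint_eq_smul_add, midpoint_eq_smul_add, ← chi_union_of_disjoint h,
    ← chi_union_of_disjoint h', hunion]

theorem chi_pair_mem_poly {G : SimpleGraph V} {u w : V} (h : G.Adj u w) :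
    chi {u, w} ∈ poly G :=
  subset_convexHull ℝ _ (Or.inr (Or.inr ⟨u, w, h, rfl⟩))

theorem IsExtreme.left_mem_of_midpoint_mem {𝕜 E : Type*} [Field 𝕜] [LinearOrder 𝕜]
    [IsStrictOrderedRing 𝕜] [AddCommGroup E] [Module 𝕜 E] {A B : Set E} (hB : IsExtreme 𝕜 A B)
    {x y : E} (hx : x ∈ A) (hy : y ∈ A) (hmid : midpoint 𝕜 x y ∈ B) : x ∈ B :=
  hB.left_mem_of_mem_openSegment hx hy hmid (midpoint_mem_openSegment x y)

theorem segment_subset_setOf_apply_eq {𝕜 ι : Type*} [Semiring 𝕜] [PartialOrder 𝕜]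
    {p q : ι → 𝕜} {i j : ι} (hp : p i = p j) (hq : q i = q j) :
    segment 𝕜 p q ⊆ {z | z i = z j} := by
  rintro _ ⟨s, t, -, -, -, rfl⟩
  simp [hp, hq]

theorem stmt6_general (G : SimpleGraph V) {a b c d : V}
    (he : G.Adj a b) (hf : G.Adj c d)
    (hac : a ≠ c) (had : a ≠ d) (hbc : b ≠ c) (hbd : b ≠ d)
    (he' : G.Adj b c) (hf' : G.Adj d a) :
    midpoint ℝ (chi ({a, b} : Set V)) (chi ({c, d} : Set V)) =
      midpoint ℝ (chi ({b, c} : Set V)) (chi ({d, a} : Set V)) ∧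
    ¬ AdjVert (poly G) (chi ({a, b} : Set V)) (chi ({c, d} : Set V)) := by
  have hab := he.ne
  have hcd := hf.ne
  have hmid : midpoint ℝ (chi ({a, b} : Set V)) (chi ({c, d} : Set V)) =
      midpoint ℝ (chi ({b, c} : Set V)) (chi ({d, a} : Set V)) := by
    refine midpoint_chi_eq_of_union_eq (disjoint_pair_pair hac had hbc hbd)
      (disjoint_pair_pair hbd hab.symm hcd hac.symm) ?_
    ext x
    simp only [mem_union, mem_insert_iff, mem_singleton_iff]
    tauto
  refine ⟨hmid, fun ⟨_, hface⟩ => ?_⟩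
  have hbc_mem : chi {b, c} ∈ segment ℝ (chi {a, b}) (chi {c, d}) :=
    hface.left_mem_of_midpoint_mem (chi_pair_mem_poly he') (chi_pair_mem_poly hf')
      (hmid ▸ midpoint_mem_segment _ _)
  have hab_eq : chi {b, c} a = chi {b, c} b :=
    segment_subset_setOf_apply_eq (by simp [chi]) (by simp [chi, hac, had, hbc, hbd]) hbc_mem
  simp [chi, hab, hac] at hab_eq

theorem stmt6 [Fintype V] (G : SimpleGraph V) {a b c d : V}
    (he : G.Adj a b) (hf : G.Adj c d)
    (hac : a ≠ c) (had : a ≠ d) (hbc : b ≠ c) (hbd : b ≠ d)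
    (he' : G.Adj b c) (hf' : G.Adj d a) :
    midpoint ℝ (chi ({a, b} : Set V)) (chi ({c, d} : Set V)) =
      midpoint ℝ (chi ({b, c} : Set V)) (chi ({d, a} : Set V)) ∧
    ¬ AdjVert (poly G) (chi ({a, b} : Set V)) (chi ({c, d} : Set V)) :=
  stmt6_general G he hf hac had hbc hbd he' hf'
end
end

section
/- The polytope P(Γ) is combinatorial: it is a 0/1-polytope, and for any two nonadjacent vertices p and q of P(Γ), there exist two other vertices r and s with p + q = r + s (i.e. the midpoint of p and q is the midpoint of two other vertices). -/
open Set

noncomputable section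

variable {V : Type*}

/-! A generator `χ S` of `P(Γ)` is a 0/1 point of the unit cube, hence a vertex. For two distinct
vertices `p` and `q`, either `p + q` is also the sum of two other generators (for instance
`χ ∅ + χ {u, w} = χ {u} + χ {w}`), or some weight vector `c` has `∑ cᵢ xᵢ ≤ m` on all generators
with equality exactly at `p` and `q`. In the second case the face of `P(Γ)` exposed by `c` is
compact and convex, so by Krein–Milman it is the hull of its extreme points, which are generators
on the hyperplane: the face is the segment `[p, q]`. -/

section Exposing

variable {E : Type*} [AddCommGroup E] [Module ℝ E] [TopologicalSpace E] [T2Space E]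
  [IsTopologicalAddGroup E] [ContinuousSMul ℝ E] [LocallyConvexSpace ℝ E]

theorem isExtreme_convexHull_segment_of_exposing {S : Set E} (hS : S.Finite)
    (l : StrongDual ℝ E) {m : ℝ} {p q : E} (hp : p ∈ S) (hq : q ∈ S) (hpm : l p = m)
    (hqm : l q = m) (hl : ∀ x ∈ S, x = p ∨ x = q ∨ l x < m) :
    IsExtreme ℝ (convexHull ℝ S) (segment ℝ p q) := by
  have hle : convexHull ℝ S ⊆ {x | l x ≤ m} := by
    refine convexHull_min (fun x hx => ?_) (convex_halfSpace_le l.isLinear m)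
    rcases hl x hx with rfl | rfl | h
    exacts [hpm.le, hqm.le, h.le]
  set F := l.toExposed (convexHull ℝ S)
  have hF : IsExposed ℝ (convexHull ℝ S) F := ContinuousLinearMap.toExposed.isExposed
  have hFconv : Convex ℝ F := hF.convex (convex_convexHull ℝ S)
  have mem_F {x : E} (hx : x ∈ S) (hxm : l x = m) : x ∈ F :=
    ⟨subset_convexHull ℝ S hx, fun y hy => hxm ▸ hle hy⟩
  have hFm : ∀ x ∈ F, l x = m := fun x hx =>
    le_antisymm (hle hx.1) (hpm ▸ hx.2 p (subset_convexHull ℝ S hp))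
  suffices F = segment ℝ p q from this ▸ hF.isExtreme
  rw [← convexHull_pair (𝕜 := ℝ)]
  refine subset_antisymm ?_ (convexHull_min ?_ hFconv)
  · have hext : F.extremePoints ℝ ⊆ {p, q} := fun x hx => by
      have hxS := extremePoints_convexHull_subset
        (hF.isExtreme.extremePoints_subset_extremePoints hx)
      rcases hl x hxS with rfl | rfl | h
      exacts [Or.inl rfl, Or.inr rfl, absurd (hFm x hx.1) h.ne]
    rw [← closure_convexHull_extremePoints (hF.isCompact (hS.isCompact_convexHull ℝ)) hFconv]
    exact closure_minimal (convexHull_mono hext)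
      ((Set.toFinite _).isCompact_convexHull ℝ).isClosed
  · rintro x (rfl | rfl)
    exacts [mem_F hp hpm, mem_F hq hqm]

end Exposing

section Cube

variable {ι : Type*}

theorem mem_extremePoints_of_subset_unitCube {s : Set (ι → ℝ)}
    (hs : s ⊆ univ.pi fun _ => Icc 0 1) {x : ι → ℝ} (hx : x ∈ s)
    (h01 : ∀ i, x i = 0 ∨ x i = 1) : x ∈ s.extremePoints ℝ := by
  refine inter_extremePoints_subset_extremePoints_of_subset hs ⟨hx, ?_⟩
  rw [extremePoints_pi]
  intro i _
  rw [extremePoints_Icc zero_le_one]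
  exact h01 i

theorem convexHull_subset_unitCube {s : Set (ι → ℝ)}
    (h01 : ∀ x ∈ s, ∀ i, x i = 0 ∨ x i = 1) : convexHull ℝ s ⊆ univ.pi fun _ => Icc 0 1 := by
  refine convexHull_min (fun x hx i _ => ?_) (convex_pi fun _ _ => convex_Icc 0 1)
  rcases h01 x hx i with h | h <;> simp [h]

end Cube

section Chi

theorem chi_injective : Function.Injective (chi : Set V → V → ℝ) := by
  intro S T h
  ext v
  have := congrFun h v
  by_cases hS : v ∈ S <;> by_cases hT : v ∈ T <;> simp_all [chi]

theorem chi_ne_chi {S T : Set V} {v : V} (hS : v ∈ S) (hT : v ∉ T) : chi S ≠ chi T :=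
  chi_injective.ne (ne_of_mem_of_not_mem' hS hT)

theorem chi_apply_eq_zero_or_one (S : Set V) (v : V) : chi S v = 0 ∨ chi S v = 1 := by
  by_cases hv : v ∈ S <;> simp [chi, hv]

theorem chi_empty : chi (∅ : Set V) = 0 :=
  Set.indicator_empty _

theorem chi_pair_s8 {u w : V} (h : u ≠ w) : chi ({u, w} : Set V) = chi {u} + chi {w} := by
  rw [chi, Set.insert_eq, Set.indicator_union_of_disjoint (by simpa using h)]
  rfl

end Chi

section Weights

variable [Fintype V]

def weightFunctional (c : V → ℝ) : StrongDual ℝ (V → ℝ) :=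
  ∑ v, c v • ContinuousLinearMap.proj v

variable (c : V → ℝ)

@[simp]
theorem weightFunctional_chi_empty : weightFunctional c (chi ∅) = 0 := by
  rw [chi_empty, map_zero]

@[simp]
theorem weightFunctional_chi_singleton (v : V) : weightFunctional c (chi {v}) = c v := by
  classical
  simp [weightFunctional, chi, Pi.single_apply]

theorem weightFunctional_chi_pair {u w : V} (h : u ≠ w) :
    weightFunctional c (chi {u, w}) = c u + c w := by
  rw [chi_pair_s8 h, map_add, weightFunctional_chi_singleton, weightFunctional_chi_singleton]

end Weights

theorem AdjVert.symm {P : Set (V → ℝ)} {p q : V → ℝ} (h : AdjVert P p q) : AdjVert P q p :=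
  ⟨h.1.symm, segment_symm ℝ p q ▸ h.2⟩

def HasOtherMidpointPair {E : Type*} [Add E] (S : Set E) (p q : E) : Prop :=
  ∃ r ∈ S, ∃ s ∈ S, r ≠ p ∧ r ≠ q ∧ s ≠ p ∧ s ≠ q ∧ p + q = r + s

namespace HasOtherMidpointPair

variable {E : Type*} [AddCommGroup E] {S : Set E} {p q r s : E}

theorem of_add_eq (hr : r ∈ S) (hs : s ∈ S) (hrp : r ≠ p) (hrq : r ≠ q) (h : p + q = r + s) :
    HasOtherMidpointPair S p q := by
  refine ⟨r, hr, s, hs, hrp, hrq, fun hsp => hrq ?_, fun hsq => hrp ?_, h⟩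
  · subst hsp; exact (add_left_cancel (h.trans (add_comm r s))).symm
  · subst hsq; exact (add_right_cancel h).symm

theorem symm (h : HasOtherMidpointPair S p q) : HasOtherMidpointPair S q p := by
  obtain ⟨r, hr, s, hs, hrp, hrq, hsp, hsq, h⟩ := h
  exact ⟨r, hr, s, hs, hrq, hrp, hsq, hsp, add_comm q p ▸ h⟩

end HasOtherMidpointPair

namespace SimpleGraph

section PolyVerts

variable (G : SimpleGraph V)

theorem chi_empty_mem_polyVerts : chi ∅ ∈ polyVerts G :=
  Or.inl rfl

theorem chi_singleton_mem_polyVerts (v : V) : chi {v} ∈ polyVerts G :=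
  Or.inr (Or.inl ⟨v, rfl⟩)

variable {G} in
theorem Adj.chi_pair_mem_polyVerts {u w : V} (h : G.Adj u w) : chi {u, w} ∈ polyVerts G :=
  Or.inr (Or.inr ⟨u, w, h, rfl⟩)

theorem exists_chi_of_mem_polyVerts {x : V → ℝ} (hx : x ∈ polyVerts G) : ∃ S, x = chi S := by
  rcases hx with rfl | ⟨v, rfl⟩ | ⟨u, w, -, rfl⟩ <;> exact ⟨_, rfl⟩

theorem eq_zero_or_one_of_mem_polyVerts {x : V → ℝ} (hx : x ∈ polyVerts G) (i : V) :
    x i = 0 ∨ x i = 1 := by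
  obtain ⟨S, rfl⟩ := G.exists_chi_of_mem_polyVerts hx
  exact chi_apply_eq_zero_or_one S i

theorem polyVerts_finite [Finite V] : (polyVerts G).Finite :=
  (Set.finite_range chi).subset fun _ hx =>
    (G.exists_chi_of_mem_polyVerts hx).imp fun _ => Eq.symm

theorem extremePoints_poly : (poly G).extremePoints ℝ = polyVerts G := by
  refine subset_antisymm extremePoints_convexHull_subset fun x hx => ?_
  exact mem_extremePoints_of_subset_unitCube
    (convexHull_subset_unitCube fun _ => G.eq_zero_or_one_of_mem_polyVerts)
    (subset_convexHull ℝ _ hx) (G.eq_zero_or_one_of_mem_polyVerts hx)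

end PolyVerts

section Splits

variable {G : SimpleGraph V}

theorem hasOtherMidpointPair_empty_pair {u w : V} (huw : G.Adj u w) :
    HasOtherMidpointPair (polyVerts G) (chi ∅) (chi {u, w}) :=
  .of_add_eq (G.chi_singleton_mem_polyVerts u) (G.chi_singleton_mem_polyVerts w)
    (chi_ne_chi (mem_singleton u) (notMem_empty u))
    (chi_ne_chi (v := w) (by simp) (by simpa using huw.ne')).symm
    (by rw [chi_empty, zero_add, chi_pair_s8 huw.ne])

theorem hasOtherMidpointPair_singleton_pair {v u w : V} (huw : G.Adj u w) (hvw : G.Adj v w)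
    (hvu : v ≠ u) : HasOtherMidpointPair (polyVerts G) (chi {v}) (chi {u, w}) :=
  .of_add_eq (G.chi_singleton_mem_polyVerts u) hvw.chi_pair_mem_polyVerts
    (chi_ne_chi (mem_singleton u) hvu.symm)
    (chi_ne_chi (v := w) (by simp) (by simpa using huw.ne')).symm
    (by rw [chi_pair_s8 huw.ne, chi_pair_s8 hvw.ne]; abel)

theorem hasOtherMidpointPair_pair_pair {a b c d : V} (hab : G.Adj a b) (hcd : G.Adj c d)
    (hac : G.Adj a c) (hbd : G.Adj b d) (had : a ≠ d) (hbc : b ≠ c) :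
    HasOtherMidpointPair (polyVerts G) (chi {a, b}) (chi {c, d}) :=
  .of_add_eq hac.chi_pair_mem_polyVerts hbd.chi_pair_mem_polyVerts
    (chi_ne_chi (v := c) (by simp) (by simp [hac.ne', hbc.symm]))
    (chi_ne_chi (v := a) (by simp) (by simp [hac.ne, had]))
    (by rw [chi_pair_s8 hab.ne, chi_pair_s8 hcd.ne, chi_pair_s8 hac.ne, chi_pair_s8 hbd.ne]; abel)

end Splits

variable [Fintype V] {G : SimpleGraph V}

theorem adjVert_poly_of_weights (c : V → ℝ) (m : ℝ) {p q : V → ℝ} (hp : p ∈ polyVerts G)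
    (hq : q ∈ polyVerts G) (hpq : p ≠ q) (hpm : weightFunctional c p = m)
    (hqm : weightFunctional c q = m) (hempty : chi ∅ = p ∨ chi ∅ = q ∨ 0 < m)
    (hsingle : ∀ v, chi {v} = p ∨ chi {v} = q ∨ c v < m)
    (hpair : ∀ u w, G.Adj u w → chi {u, w} = p ∨ chi {u, w} = q ∨ c u + c w < m) :
    AdjVert (poly G) p q := by
  refine ⟨hpq, isExtreme_convexHull_segment_of_exposing G.polyVerts_finite _ hp hq hpm hqm ?_⟩
  rintro x (rfl | ⟨v, rfl⟩ | ⟨u, w, huw, rfl⟩)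
  · simpa [eq_comm] using hempty
  · simpa [eq_comm] using hsingle v
  · simpa [eq_comm, weightFunctional_chi_pair c huw.ne] using hpair u w huw

theorem adjVert_empty_singleton (v : V) : AdjVert (poly G) (chi ∅) (chi {v}) := by
  classical
  refine adjVert_poly_of_weights (fun t => if t = v then 0 else -1) 0
    G.chi_empty_mem_polyVerts (G.chi_singleton_mem_polyVerts v)
    (chi_ne_chi (v := v) (by simp) (by simp)).symm (by simp) (by simp)
    (Or.inl rfl) (fun x => ?_) (fun x y hxy => ?_)
  · simp only [chi_injective.eq_iff, singleton_eq_singleton_iff]; grind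
  · grind [Adj.ne]

theorem adjVert_singleton_singleton {u v : V} (huv : u ≠ v) (h : ¬G.Adj u v) :
    AdjVert (poly G) (chi {u}) (chi {v}) := by
  classical
  refine adjVert_poly_of_weights (fun t => if t = u ∨ t = v then 1 else -1) 1
    (G.chi_singleton_mem_polyVerts u) (G.chi_singleton_mem_polyVerts v)
    (chi_ne_chi (v := u) (by simp) (by simpa using huv)) (by simp) (by simp)
    (by norm_num) (fun x => ?_) (fun x y hxy => ?_)
  · simp only [chi_injective.eq_iff, singleton_eq_singleton_iff]; grind
  · grind [Adj.ne, Adj.symm]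

theorem adjVert_singleton_pair {u w : V} (huw : G.Adj u w) :
    AdjVert (poly G) (chi {u}) (chi {u, w}) := by
  classical
  refine adjVert_poly_of_weights (fun t => if t = u then 1 else if t = w then 0 else -1) 1
    (G.chi_singleton_mem_polyVerts u) huw.chi_pair_mem_polyVerts
    (chi_ne_chi (v := w) (by simp) (by simpa using huw.ne')).symm (by simp)
    (by simp [weightFunctional_chi_pair _ huw.ne, huw.ne']) (by norm_num) (fun x => ?_)
    (fun x y hxy => ?_)
  · simp only [chi_injective.eq_iff, singleton_eq_singleton_iff]; grind
  · simp only [chi_injective.eq_iff, pair_eq_pair_iff]; grind [Adj.ne, Adj.symm]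

theorem adjVert_singleton_pair_of_not_adj {v u w : V} (huw : G.Adj u w) (hvu : v ≠ u)
    (hvw : v ≠ w) (hu : ¬G.Adj v u) (hw : ¬G.Adj v w) :
    AdjVert (poly G) (chi {v}) (chi {u, w}) := by
  classical
  refine adjVert_poly_of_weights
    (fun t => if t = v then 2 else if t = u ∨ t = w then 1 else -1) 2
    (G.chi_singleton_mem_polyVerts v) huw.chi_pair_mem_polyVerts
    (chi_ne_chi (v := v) (by simp) (by simp [hvu, hvw])) (by simp)
    (by simp [weightFunctional_chi_pair _ huw.ne, hvu.symm, hvw.symm]; norm_num)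
    (by norm_num) (fun x => ?_) (fun x y hxy => ?_)
  · simp only [chi_injective.eq_iff, singleton_eq_singleton_iff]; grind
  · simp only [chi_injective.eq_iff, pair_eq_pair_iff]; grind [Adj.ne, Adj.symm]

theorem adjVert_pair_pair_of_adj_of_adj {u a b : V} (hua : G.Adj u a) (hub : G.Adj u b)
    (hab : a ≠ b) : AdjVert (poly G) (chi {u, a}) (chi {u, b}) := by
  classical
  refine adjVert_poly_of_weights (fun t => if t = u then 2 else if t = a ∨ t = b then 1 else 0) 3
    hua.chi_pair_mem_polyVerts hub.chi_pair_mem_polyVerts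
    (chi_ne_chi (v := a) (by simp) (by simp [hua.ne.symm, hab]))
    (by simp [weightFunctional_chi_pair _ hua.ne, hua.ne.symm]; norm_num)
    (by simp [weightFunctional_chi_pair _ hub.ne, hub.ne.symm]; norm_num)
    (by norm_num) (fun x => ?_) (fun x y hxy => ?_)
  · grind
  · simp only [chi_injective.eq_iff, pair_eq_pair_iff]; grind [Adj.ne, Adj.symm]

theorem adjVert_pair_pair_of_not_adj {a b c d : V} (hab : G.Adj a b) (hcd : G.Adj c d)
    (hac : a ≠ c) (had : a ≠ d) (hbc : b ≠ c) (hbd : b ≠ d) (hc : ¬G.Adj a c)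
    (hd : ¬G.Adj a d) : AdjVert (poly G) (chi {a, b}) (chi {c, d}) := by
  classical
  refine adjVert_poly_of_weights
    (fun t => if t = a then 3 else if t = b then 1 else if t = c ∨ t = d then 2 else 0) 4
    hab.chi_pair_mem_polyVerts hcd.chi_pair_mem_polyVerts
    (chi_ne_chi (v := a) (by simp) (by simp [hac, had]))
    (by simp [weightFunctional_chi_pair _ hab.ne, hab.ne.symm]; norm_num)
    (by simp [weightFunctional_chi_pair _ hcd.ne, hac.symm, had.symm, hbc.symm, hbd.symm]
        norm_num)
    (by norm_num) (fun x => ?_) (fun x y hxy => ?_)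
  · grind
  · simp only [chi_injective.eq_iff, pair_eq_pair_iff]; grind [Adj.ne, Adj.symm]

theorem adjVert_or_hasOtherMidpointPair_singleton_singleton {u v : V} (huv : u ≠ v) :
    AdjVert (poly G) (chi {u}) (chi {v}) ∨
      HasOtherMidpointPair (polyVerts G) (chi {u}) (chi {v}) := by
  by_cases h : G.Adj u v
  · exact .inr <| .of_add_eq G.chi_empty_mem_polyVerts h.chi_pair_mem_polyVerts
      (chi_ne_chi (mem_singleton u) (notMem_empty u)).symm
      (chi_ne_chi (mem_singleton v) (notMem_empty v)).symm
      (by rw [chi_empty, zero_add, chi_pair_s8 huv])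
  · exact .inl (adjVert_singleton_singleton huv h)

theorem adjVert_or_hasOtherMidpointPair_singleton_pair {v u w : V} (huw : G.Adj u w) :
    AdjVert (poly G) (chi {v}) (chi {u, w}) ∨
      HasOtherMidpointPair (polyVerts G) (chi {v}) (chi {u, w}) := by
  rcases eq_or_ne v u with rfl | hvu
  · exact .inl (adjVert_singleton_pair huw)
  rcases eq_or_ne v w with rfl | hvw
  · rw [pair_comm]
    exact .inl (adjVert_singleton_pair huw.symm)
  by_cases hw : G.Adj v w
  · exact .inr (hasOtherMidpointPair_singleton_pair huw hw hvu)
  by_cases hu : G.Adj v u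
  · rw [pair_comm]
    exact .inr (hasOtherMidpointPair_singleton_pair huw.symm hu hvw)
  · exact .inl (adjVert_singleton_pair_of_not_adj huw hvu hvw hu hw)

theorem adjVert_or_hasOtherMidpointPair_pair_pair_of_disjoint {a b c d : V} (hab : G.Adj a b)
    (hcd : G.Adj c d) (hac : a ≠ c) (had : a ≠ d) (hbc : b ≠ c) (hbd : b ≠ d) :
    AdjVert (poly G) (chi {a, b}) (chi {c, d}) ∨
      HasOtherMidpointPair (polyVerts G) (chi {a, b}) (chi {c, d}) := by
  by_cases h₁ : G.Adj a c ∧ G.Adj b d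
  · exact .inr (hasOtherMidpointPair_pair_pair hab hcd h₁.1 h₁.2 had hbc)
  by_cases h₂ : G.Adj a d ∧ G.Adj b c
  · rw [pair_comm c d]
    exact .inr (hasOtherMidpointPair_pair_pair hab hcd.symm h₂.1 h₂.2 hac hbd)
  left
  -- otherwise one of the four endpoints has no neighbour on the other edge
  rcases not_and_or.mp h₁ with hac' | hbd' <;> rcases not_and_or.mp h₂ with had' | hbc'
  · exact adjVert_pair_pair_of_not_adj hab hcd hac had hbc hbd hac' had'
  · exact (adjVert_pair_pair_of_not_adj hcd hab hac.symm hbc.symm (Ne.symm had) (Ne.symm hbd)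
      (fun h => hac' h.symm) (fun h => hbc' h.symm)).symm
  · rw [pair_comm c d]
    exact (adjVert_pair_pair_of_not_adj hcd.symm hab had.symm hbd.symm hac.symm hbc.symm
      (fun h => had' h.symm) (fun h => hbd' h.symm)).symm
  · rw [pair_comm a b]
    exact adjVert_pair_pair_of_not_adj hab.symm hcd hbc hbd hac had hbc' hbd'

theorem adjVert_or_hasOtherMidpointPair_pair_pair {a b c d : V} (hab : G.Adj a b)
    (hcd : G.Adj c d) (hne : chi {a, b} ≠ chi {c, d}) :
    AdjVert (poly G) (chi {a, b}) (chi {c, d}) ∨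
      HasOtherMidpointPair (polyVerts G) (chi {a, b}) (chi {c, d}) := by
  rcases eq_or_ne a c with rfl | hac
  · exact .inl (adjVert_pair_pair_of_adj_of_adj hab hcd (by rintro rfl; exact hne rfl))
  rcases eq_or_ne a d with rfl | had
  · rw [pair_comm c a] at hne ⊢
    exact .inl (adjVert_pair_pair_of_adj_of_adj hab hcd.symm (by rintro rfl; exact hne rfl))
  rcases eq_or_ne b c with rfl | hbc
  · rw [pair_comm a b] at hne ⊢
    exact .inl (adjVert_pair_pair_of_adj_of_adj hab.symm hcd (by rintro rfl; exact hne rfl))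
  rcases eq_or_ne b d with rfl | hbd
  · rw [pair_comm a b, pair_comm c b] at hne ⊢
    exact .inl (adjVert_pair_pair_of_adj_of_adj hab.symm hcd.symm (by rintro rfl; exact hne rfl))
  exact adjVert_or_hasOtherMidpointPair_pair_pair_of_disjoint hab hcd hac had hbc hbd

theorem adjVert_or_hasOtherMidpointPair {p q : V → ℝ} (hp : p ∈ polyVerts G)
    (hq : q ∈ polyVerts G) (hpq : p ≠ q) :
    AdjVert (poly G) p q ∨ HasOtherMidpointPair (polyVerts G) p q := by
  have swap {p q : V → ℝ} : AdjVert (poly G) p q ∨ HasOtherMidpointPair (polyVerts G) p q →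
      AdjVert (poly G) q p ∨ HasOtherMidpointPair (polyVerts G) q p :=
    Or.imp AdjVert.symm HasOtherMidpointPair.symm
  rcases hp with rfl | ⟨v, rfl⟩ | ⟨a, b, hab, rfl⟩ <;>
    rcases hq with rfl | ⟨v', rfl⟩ | ⟨c, d, hcd, rfl⟩
  · exact absurd rfl hpq
  · exact .inl (adjVert_empty_singleton v')
  · exact .inr (hasOtherMidpointPair_empty_pair hcd)
  · exact swap (.inl (adjVert_empty_singleton v))
  · exact adjVert_or_hasOtherMidpointPair_singleton_singleton (fun h => hpq (h ▸ rfl))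
  · exact adjVert_or_hasOtherMidpointPair_singleton_pair hcd
  · exact swap (.inr (hasOtherMidpointPair_empty_pair hab))
  · exact swap (adjVert_or_hasOtherMidpointPair_singleton_pair hab)
  · exact adjVert_or_hasOtherMidpointPair_pair_pair hab hcd hpq

end SimpleGraph

theorem stmt8_general [Fintype V] (G : SimpleGraph V) :
    (∀ p ∈ (poly G).extremePoints ℝ, ∀ i : V, p i = 0 ∨ p i = 1) ∧
    (∀ p ∈ (poly G).extremePoints ℝ, ∀ q ∈ (poly G).extremePoints ℝ,
      p ≠ q → ¬ AdjVert (poly G) p q →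
        ∃ r ∈ (poly G).extremePoints ℝ, ∃ s ∈ (poly G).extremePoints ℝ,
          r ≠ p ∧ r ≠ q ∧ s ≠ p ∧ s ≠ q ∧ p + q = r + s) := by
  rw [G.extremePoints_poly]
  exact ⟨fun p hp => G.eq_zero_or_one_of_mem_polyVerts hp,
    fun p hp q hq hpq hnadj => (G.adjVert_or_hasOtherMidpointPair hp hq hpq).resolve_left hnadj⟩

theorem stmt8 [Fintype V] [Nonempty V] (G : SimpleGraph V) :
    (∀ p ∈ (poly G).extremePoints ℝ, ∀ i : V, p i = 0 ∨ p i = 1) ∧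
    (∀ p ∈ (poly G).extremePoints ℝ, ∀ q ∈ (poly G).extremePoints ℝ,
      p ≠ q → ¬ AdjVert (poly G) p q →
        ∃ r ∈ (poly G).extremePoints ℝ, ∃ s ∈ (poly G).extremePoints ℝ,
          r ≠ p ∧ r ≠ q ∧ s ≠ p ∧ s ≠ q ∧ p + q = r + s) :=
  stmt8_general G
end
end

section
/- Suppose Γ has a bipartition of V into two stable sets C and D and a node v₀ ∈ C linked to every node of D. Then the affine map T : ℝ^V → ℝ^V given by (Tx)_{v₀} = 1 − Σ_{a ∈ C} x_a and (Tx)_u = x_u for u ≠ v₀ is an affine involution of ℝ^V that permutes the vertices of P(Γ): it exchanges χ(∅) with χ({v₀}), exchanges χ({b}) with χ({v₀, b}) for each b ∈ D, and fixes every other vertex of P(Γ). -/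
open Set

noncomputable section

variable {V : Type*}

/-!
`T` changes only the `v₀`-coordinate, and since `v₀ ∈ C` the `C`-sum of `T x` is `1 - x v₀`;
hence `T` is an involution. On a characteristic vector `χ(S)`, `T` toggles `v₀` when `S` misses
`C`, and fixes `χ(S)` when `S` meets `C` in a single node other than `v₀`. Since `C, D` is a
bipartition, every vertex of `P(Γ)` is of one of these two kinds.
-/

def vertexSwap [DecidableEq V] (C : Finset V) (v₀ : V) : (V → ℝ) →ᵃ[ℝ] (V → ℝ) :=
  (LinearMap.pi fun u : V =>
      if u = v₀ then -∑ a ∈ C, (LinearMap.proj a : (V → ℝ) →ₗ[ℝ] ℝ) else LinearMap.proj u).toAffineMap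
    + AffineMap.const ℝ (V → ℝ) (Pi.single v₀ 1 : V → ℝ)

section vertexSwap

variable [DecidableEq V] {C : Finset V} {v₀ : V}

lemma vertexSwap_apply (x : V → ℝ) (u : V) :
    vertexSwap C v₀ x u = if u = v₀ then 1 - ∑ a ∈ C, x a else x u := by
  by_cases h : u = v₀
  · subst h; simp [vertexSwap, sub_eq_neg_add]
  · simp [vertexSwap, h]

lemma sum_vertexSwap (hv₀ : v₀ ∈ C) (x : V → ℝ) :
    ∑ a ∈ C, vertexSwap C v₀ x a = 1 - x v₀ := by
  have hsum : ∑ a ∈ C.erase v₀, vertexSwap C v₀ x a = ∑ a ∈ C.erase v₀, x a :=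
    Finset.sum_congr rfl fun a ha => by rw [vertexSwap_apply, if_neg (Finset.ne_of_mem_erase ha)]
  rw [← Finset.sum_erase_add _ _ hv₀, hsum, vertexSwap_apply, if_pos rfl,
    ← Finset.sum_erase_add _ _ hv₀]
  ring

lemma vertexSwap_involutive (hv₀ : v₀ ∈ C) : Function.Involutive (vertexSwap C v₀) := by
  intro x
  funext u
  by_cases h : u = v₀
  · subst h; rw [vertexSwap_apply, if_pos rfl, sum_vertexSwap hv₀]; ring
  · rw [vertexSwap_apply, if_neg h, vertexSwap_apply, if_neg h]

lemma vertexSwap_chi_of_disjoint {S : Set V} (hS : ∀ c ∈ C, c ∉ S) :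
    vertexSwap C v₀ (chi S) = chi (insert v₀ S) := by
  classical
  funext u
  have hsum : ∑ c ∈ C, chi S c = 0 :=
    Finset.sum_eq_zero fun c hc => Set.indicator_of_notMem (hS c hc) _
  by_cases h : u = v₀
  · subst h; rw [vertexSwap_apply, if_pos rfl, hsum]; simp [chi]
  · rw [vertexSwap_apply, if_neg h]; simp [chi, Set.indicator_apply, h]

lemma vertexSwap_chi_insert_of_disjoint (hv₀ : v₀ ∈ C) {S : Set V} (hS : ∀ c ∈ C, c ∉ S) :
    vertexSwap C v₀ (chi (insert v₀ S)) = chi S := by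
  rw [← vertexSwap_chi_of_disjoint hS, vertexSwap_involutive hv₀]

lemma vertexSwap_chi_of_inter_eq_singleton (hv₀ : v₀ ∈ C) {S : Set V} {a : V} (ha : a ∈ C)
    (hav₀ : a ≠ v₀) (hS : ∀ c ∈ C, c ∈ S ↔ c = a) :
    vertexSwap C v₀ (chi S) = chi S := by
  classical
  funext u
  have hsum : ∑ c ∈ C, chi S c = 1 := by
    rw [Finset.sum_congr rfl fun c hc => by rw [chi, Set.indicator_apply, if_congr (hS c hc) rfl rfl],
      Finset.sum_ite_eq' C a, if_pos ha]
  have hv₀S : v₀ ∉ S := fun h => hav₀ ((hS v₀ hv₀).1 h).symm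
  by_cases h : u = v₀
  · subst h; rw [vertexSwap_apply, if_pos rfl, hsum]; simp [chi, hv₀S]
  · simp [vertexSwap_apply, h]

end vertexSwap

section bipartite

variable [Fintype V] [DecidableEq V] {G : SimpleGraph V} {C D : Finset V}

lemma exists_pair_eq_of_adj (hunion : C ∪ D = Finset.univ) (hC : ∀ a ∈ C, ∀ b ∈ C, ¬ G.Adj a b)
    (hD : ∀ a ∈ D, ∀ b ∈ D, ¬ G.Adj a b) {u w : V} (huw : G.Adj u w) :
    ∃ a ∈ C, ∃ b ∈ D, ({u, w} : Set V) = {a, b} := by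
  have hmem (v : V) : v ∈ C ∨ v ∈ D := Finset.mem_union.mp (hunion ▸ Finset.mem_univ v)
  rcases hmem u with hu | hu <;> rcases hmem w with hw | hw
  · exact absurd huw (hC u hu w hw)
  · exact ⟨u, hu, w, hw, rfl⟩
  · exact ⟨w, hw, u, hu, Set.pair_comm u w⟩
  · exact absurd huw (hD u hu w hw)

lemma polyVerts_cases (hunion : C ∪ D = Finset.univ) (hdisj : Disjoint C D)
    (hC : ∀ a ∈ C, ∀ b ∈ C, ¬ G.Adj a b) (hD : ∀ a ∈ D, ∀ b ∈ D, ¬ G.Adj a b)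
    {v₀ : V} (hv₀ : v₀ ∈ C) {x : V → ℝ} (hx : x ∈ polyVerts G) :
    x = chi ∅ ∨ x = chi {v₀} ∨ (∃ b ∈ D, x = chi {b} ∨ x = chi {v₀, b}) ∨
      vertexSwap C v₀ x = x := by
  have hnotC {b : V} (hb : b ∈ D) : b ∉ C := Finset.disjoint_right.mp hdisj hb
  rcases hx with rfl | ⟨v, rfl⟩ | ⟨u, w, huw, rfl⟩
  · exact Or.inl rfl
  · rcases Finset.mem_union.mp (hunion ▸ Finset.mem_univ v) with hv | hv
    · by_cases hvv₀ : v = v₀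
      · exact Or.inr (Or.inl (hvv₀ ▸ rfl))
      · exact Or.inr (Or.inr (Or.inr (vertexSwap_chi_of_inter_eq_singleton hv₀ hv hvv₀
          fun c _ => Set.mem_singleton_iff)))
    · exact Or.inr (Or.inr (Or.inl ⟨v, hv, Or.inl rfl⟩))
  · obtain ⟨a, ha, b, hb, hpair⟩ := exists_pair_eq_of_adj hunion hC hD huw
    rw [hpair]
    by_cases hav₀ : a = v₀
    · exact Or.inr (Or.inr (Or.inl ⟨b, hb, Or.inr (hav₀ ▸ rfl)⟩))
    · refine Or.inr (Or.inr (Or.inr (vertexSwap_chi_of_inter_eq_singleton hv₀ ha hav₀ ?_)))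
      intro c hc
      have hcb : c ≠ b := fun h => hnotC hb (h ▸ hc)
      simp [hcb]

end bipartite

theorem stmt12 [Fintype V] [DecidableEq V] (G : SimpleGraph V)
    (C D : Finset V) (v₀ : V)
    (hunion : C ∪ D = Finset.univ) (hdisj : Disjoint C D)
    (hC : ∀ a ∈ C, ∀ b ∈ C, ¬ G.Adj a b)
    (hD : ∀ a ∈ D, ∀ b ∈ D, ¬ G.Adj a b)
    (hv₀ : v₀ ∈ C) (hlink : ∀ b ∈ D, G.Adj v₀ b)
    (T : (V → ℝ) → (V → ℝ))
    (hT : ∀ x : V → ℝ, ∀ u : V,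
      T x u = if u = v₀ then 1 - ∑ a ∈ C, x a else x u) :
    T ∘ T = id ∧
    (∃ A : (V → ℝ) →ᵃ[ℝ] (V → ℝ), ⇑A = T) ∧
    T (chi (∅ : Set V)) = chi ({v₀} : Set V) ∧
    T (chi ({v₀} : Set V)) = chi (∅ : Set V) ∧
    (∀ b ∈ D, T (chi ({b} : Set V)) = chi ({v₀, b} : Set V) ∧
      T (chi ({v₀, b} : Set V)) = chi ({b} : Set V)) ∧
    (∀ x ∈ polyVerts G,
      x ≠ chi (∅ : Set V) → x ≠ chi ({v₀} : Set V) →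
      (∀ b ∈ D, x ≠ chi ({b} : Set V) ∧ x ≠ chi ({v₀, b} : Set V)) →
      T x = x) ∧
    T '' polyVerts G = polyVerts G := by
  have hTA : T = vertexSwap C v₀ := funext fun x => funext fun u => by rw [hT, vertexSwap_apply]
  subst hTA
  have hinv := vertexSwap_involutive hv₀
  have hnotC {b : V} (hb : b ∈ D) : ∀ c ∈ C, c ∉ ({b} : Set V) := fun c hc hcb =>
    Finset.disjoint_left.mp hdisj hc (Set.mem_singleton_iff.mp hcb ▸ hb)
  have hnone : ∀ c ∈ C, c ∉ (∅ : Set V) := fun _ _ => Set.notMem_empty _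
  have h0 := vertexSwap_chi_of_disjoint (v₀ := v₀) hnone
  have h1 := vertexSwap_chi_insert_of_disjoint hv₀ hnone
  rw [← Set.singleton_def] at h0 h1
  have hswap : ∀ b ∈ D, vertexSwap C v₀ (chi {b}) = chi {v₀, b} ∧
      vertexSwap C v₀ (chi {v₀, b}) = chi {b} := fun b hb =>
    ⟨vertexSwap_chi_of_disjoint (hnotC hb), vertexSwap_chi_insert_of_disjoint hv₀ (hnotC hb)⟩
  have hmaps : MapsTo (vertexSwap C v₀) (polyVerts G) (polyVerts G) := by
    intro x hx
    rcases polyVerts_cases hunion hdisj hC hD hv₀ hx with rfl | rfl | ⟨b, hb, rfl | rfl⟩ | hfix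
    · exact h0 ▸ Or.inr (Or.inl ⟨v₀, rfl⟩)
    · exact h1 ▸ Or.inl rfl
    · exact (hswap b hb).1 ▸ Or.inr (Or.inr ⟨v₀, b, hlink b hb, rfl⟩)
    · exact (hswap b hb).2 ▸ Or.inr (Or.inl ⟨b, rfl⟩)
    · rwa [hfix]
  refine ⟨funext hinv, ⟨_, rfl⟩, h0, h1, hswap, ?_, ?_⟩
  · intro x hx hne₀ hne₁ hneD
    rcases polyVerts_cases hunion hdisj hC hD hv₀ hx with h | h | ⟨b, hb, h | h⟩ | hfix
    · exact absurd h hne₀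
    · exact absurd h hne₁
    · exact absurd h (hneD b hb).1
    · exact absurd h (hneD b hb).2
    · exact hfix
  · exact (InvOn.bijOn ⟨fun x _ => hinv x, fun x _ => hinv x⟩ hmaps hmaps).image_eq
end
end
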